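/- arXiv:1210.0473 — 4 statements merged into one kernel-verified Lean document; each statement's English description precedes it below -/
import Mathlib

section
/- Let G be a simple graph on k vertices and A_G = I + L_G. Then for every pair of distinct vertices i, j, (A_G^{-1})_{i,i} ≥ (A_G^{-1})_{i,j}. -/
/-!
Column `i` of `(I + L_G)⁻¹` is the solution `x` of `x v + ∑_{u ~ v} (x v - x u) = δ_{iv}`.
At a minimum of `x` the neighbour sum is `≤ 0`, so `x ≥ 0`; at a maximum away from `i` the
neighbour sum is `≥ 0`, so that maximum is `≤ 0 ≤ x i`. Hence `x` peaks at `i`, and symmetry of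
`(I + L_G)⁻¹` turns `x j ≤ x i` into the claim.
-/

open Matrix

namespace SimpleGraph

variable {V : Type*} [Fintype V] [DecidableEq V] (G : SimpleGraph V) [DecidableRel G.Adj]

theorem one_add_lapMatrix_mulVec_apply (x : V → ℝ) (v : V) :
    ((1 + G.lapMatrix ℝ) *ᵥ x) v = x v + ∑ u ∈ G.neighborFinset v, (x v - x u) := by
  rw [add_mulVec, one_mulVec, Pi.add_apply, lapMatrix_mulVec_apply, Finset.sum_sub_distrib,
    Finset.sum_const, card_neighborFinset_eq_degree, nsmul_eq_mul]

theorem nonneg_of_one_add_lapMatrix_mulVec_nonneg {x : V → ℝ}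
    (hx : 0 ≤ (1 + G.lapMatrix ℝ) *ᵥ x) : 0 ≤ x := by
  intro v
  cases isEmpty_or_nonempty V
  · exact isEmptyElim v
  obtain ⟨p, -, hp⟩ := Finset.exists_min_image Finset.univ x Finset.univ_nonempty
  have hsum : ∑ u ∈ G.neighborFinset p, (x p - x u) ≤ 0 :=
    Finset.sum_nonpos fun u _ => sub_nonpos.mpr (hp u (Finset.mem_univ u))
  have hxp := hx p
  rw [Pi.zero_apply, one_add_lapMatrix_mulVec_apply] at hxp
  exact (show 0 ≤ x p by linarith).trans (hp v (Finset.mem_univ v))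

theorem le_of_one_add_lapMatrix_mulVec_nonpos_off {x : V → ℝ} {i : V} (hi : 0 ≤ x i)
    (hx : ∀ v ≠ i, ((1 + G.lapMatrix ℝ) *ᵥ x) v ≤ 0) (v : V) : x v ≤ x i := by
  obtain ⟨m, -, hm⟩ := Finset.exists_max_image Finset.univ x ⟨i, Finset.mem_univ i⟩
  refine (hm v (Finset.mem_univ v)).trans ?_
  rcases eq_or_ne m i with rfl | hmi
  · exact le_rfl
  have hsum : 0 ≤ ∑ u ∈ G.neighborFinset m, (x m - x u) :=
    Finset.sum_nonneg fun u _ => sub_nonneg.mpr (hm u (Finset.mem_univ u))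
  have hxm := hx m hmi
  rw [one_add_lapMatrix_mulVec_apply] at hxm
  linarith

theorem inv_one_add_lapMatrix_apply_le_apply_self (i j : V) :
    (1 + G.lapMatrix ℝ)⁻¹ i j ≤ (1 + G.lapMatrix ℝ)⁻¹ i i := by
  set A : Matrix V V ℝ := 1 + G.lapMatrix ℝ
  have hA : IsUnit A.det :=
    (isUnit_iff_isUnit_det A).mp (PosDef.one.add_posSemidef (G.posSemidef_lapMatrix ℝ)).isUnit
  have hsymm : A⁻¹.IsSymm := (isSymm_one.add (G.isSymm_lapMatrix ℝ)).inv
  set x : V → ℝ := A⁻¹ *ᵥ Pi.single i 1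
  have hAx : A *ᵥ x = Pi.single i 1 := by
    rw [mulVec_mulVec, mul_nonsing_inv A hA, one_mulVec]
  have hx_nonneg : 0 ≤ x :=
    G.nonneg_of_one_add_lapMatrix_mulVec_nonneg (hAx ▸ Pi.single_nonneg.mpr zero_le_one)
  have hx_max := G.le_of_one_add_lapMatrix_mulVec_nonpos_off (hx_nonneg i)
    (fun v hv => by rw [hAx, Pi.single_eq_of_ne hv]) j
  simpa only [x, mulVec_single_one, col_apply, ← hsymm.apply i j] using hx_max

end SimpleGraph

theorem stmt_7_general (k : ℕ) (G : SimpleGraph (Fin k)) [DecidableRel G.Adj] (i j : Fin k) :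
    ((1 : Matrix (Fin k) (Fin k) ℝ) + G.lapMatrix ℝ)⁻¹ i j ≤
      ((1 : Matrix (Fin k) (Fin k) ℝ) + G.lapMatrix ℝ)⁻¹ i i :=
  G.inv_one_add_lapMatrix_apply_le_apply_self i j

/-- For `A_G = I + L_G`, diagonal entries of `A_G⁻¹` dominate off-diagonal ones:
`(A_G⁻¹) i j ≤ (A_G⁻¹) i i` for all `i ≠ j`. -/
theorem stmt_7 (k : ℕ) (G : SimpleGraph (Fin k)) [DecidableRel G.Adj] (i j : Fin k)
    (hij : i ≠ j) :
    ((1 : Matrix (Fin k) (Fin k) ℝ) + G.lapMatrix ℝ)⁻¹ i j ≤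
      ((1 : Matrix (Fin k) (Fin k) ℝ) + G.lapMatrix ℝ)⁻¹ i i :=
  stmt_7_general k G i j
end

section
/- Let G be a simple graph on k vertices, A_G = I + L_G, and let G' be the augmented graph (G plus a dummy vertex adjacent to all vertices). Then for all i,j in {1,...,k}, the Moore–Penrose pseudoinverse of L_{G'} satisfies (L_{G'}^+)_{i,j} = (A_G^{-1})_{i,j} − (k+2)/(k+1)^2. -/
open Matrix

/-- `B` is the Moore–Penrose pseudoinverse of `A`. -/
def IsMoorePenrose {n : Type*} [Fintype n] (A B : Matrix n n ℝ) : Prop :=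
  A * B * A = A ∧ B * A * B = B ∧ (A * B)ᵀ = A * B ∧ (B * A)ᵀ = B * A

/-- The augmented graph: `G` plus a dummy (last) vertex adjacent to every vertex of `G`. -/
def augment {k : ℕ} (G : SimpleGraph (Fin k)) : SimpleGraph (Fin (k + 1)) where
  Adj a b :=
    (∃ i j : Fin k, a = i.castSucc ∧ b = j.castSucc ∧ G.Adj i j) ∨
      (a = Fin.last k ∧ b ≠ Fin.last k) ∨ (b = Fin.last k ∧ a ≠ Fin.last k)
  symm := ⟨by
    rintro a b (⟨i, j, ha, hb, hadj⟩ | h | h)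
    · exact Or.inl ⟨j, i, hb, ha, hadj.symm⟩
    · exact Or.inr (Or.inr h)
    · exact Or.inr (Or.inl h)⟩
  loopless := ⟨by
    rintro a (⟨i, j, ha, hb, hadj⟩ | h | h)
    · exact G.loopless.irrefl i (by
        have : i = j := Fin.castSucc_injective k (ha ▸ hb ▸ rfl)
        exact this ▸ hadj)
    · exact h.2 h.1
    · exact h.2 h.1⟩

noncomputable instance {k : ℕ} (G : SimpleGraph (Fin k)) : DecidableRel (augment G).Adj :=
  Classical.decRel _

/-!
A symmetric `B` is the pseudoinverse of a symmetric `L` as soon as both have zero column sums and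
`L * B = I - J/n`, the orthogonal projection onto the complement of the all-ones vector. The
Laplacian of the augmented graph is the bordered matrix `[[A, -1], [-1ᵀ, k]]`, where `A = I + L_G`
is positive definite and has row sums `1`. From these two facts alone one checks blockwise that
`[[A⁻¹ - c J, -1/(k+1)²], [-1ᵀ/(k+1)², k/(k+1)²]]` with `c = (k+2)/(k+1)²` has the required
properties, and the pseudoinverse is unique.
-/

section MoorePenrose

variable {n : Type*} [Fintype n] {L B C : Matrix n n ℝ}

theorem IsMoorePenrose.unique (hB : IsMoorePenrose L B) (hC : IsMoorePenrose L C) : B = C := by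
  obtain ⟨hLBL, hBLB, hLB, hBL⟩ := hB
  obtain ⟨hLCL, hCLC, hLC, hCL⟩ := hC
  have hLB_eq : L * B = L * C := calc
    L * B = L * C * (L * B) := by rw [← Matrix.mul_assoc, hLCL]
    _ = ((L * B) * (L * C))ᵀ := by rw [transpose_mul, hLB, hLC]
    _ = L * C := by rw [← Matrix.mul_assoc, hLBL, hLC]
  have hBL_eq : B * L = C * L := calc
    B * L = (B * L) * (C * L) := by rw [Matrix.mul_assoc B L, ← Matrix.mul_assoc L, hLCL]
    _ = ((C * L) * (B * L))ᵀ := by rw [transpose_mul, hBL, hCL]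
    _ = C * L := by rw [Matrix.mul_assoc C L, ← Matrix.mul_assoc L, hLBL, hCL]
  calc B = B * L * B := hBLB.symm
    _ = C * L * C := by rw [hBL_eq, Matrix.mul_assoc, hLB_eq, ← Matrix.mul_assoc]
    _ = C := hCLC

variable (n) in
noncomputable def centeringMatrix [DecidableEq n] : Matrix n n ℝ :=
  1 - (Fintype.card n : ℝ)⁻¹ • vecMulVec 1 1

theorem isSymm_centeringMatrix [DecidableEq n] : (centeringMatrix n).IsSymm := by
  rw [centeringMatrix, IsSymm, transpose_sub, transpose_one, transpose_smul, transpose_vecMulVec]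

theorem centeringMatrix_mul [DecidableEq n] {M : Matrix n n ℝ} (hM : 1 ᵥ* M = 0) :
    centeringMatrix n * M = M := by
  rw [centeringMatrix, Matrix.sub_mul, Matrix.smul_mul, vecMulVec_mul, hM]
  simp

theorem centeringMatrix_apply [DecidableEq n] (x y : n) :
    centeringMatrix n x y = (1 : Matrix n n ℝ) x y - (Fintype.card n : ℝ)⁻¹ := by
  simp [centeringMatrix]

theorem isMoorePenrose_of_mul_eq_centeringMatrix [DecidableEq n] (hL : L.IsSymm) (hB : B.IsSymm)
    (hL1 : 1 ᵥ* L = 0) (hB1 : 1 ᵥ* B = 0) (hLB : L * B = centeringMatrix n) :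
    IsMoorePenrose L B := by
  have hBL : B * L = centeringMatrix n := by
    rw [← hB.eq, ← hL.eq, ← transpose_mul, hLB, isSymm_centeringMatrix.eq]
  refine ⟨?_, ?_, ?_, ?_⟩
  · rw [hLB, centeringMatrix_mul hL1]
  · rw [hBL, centeringMatrix_mul hB1]
  · rw [hLB, isSymm_centeringMatrix.eq]
  · rw [hBL, isSymm_centeringMatrix.eq]

end MoorePenrose

section Border

variable {R : Type*} {k : ℕ}

/-- `[[M, b], [b, d]]`: the last row and column are constant `b` off the corner `d`. -/
def borderMatrix (M : Matrix (Fin k) (Fin k) R) (b d : R) : Matrix (Fin (k + 1)) (Fin (k + 1)) R :=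
  of fun x y => Fin.lastCases (Fin.lastCases d (fun _ => b) y)
    (fun i => Fin.lastCases b (fun j => M i j) y) x

variable (M N : Matrix (Fin k) (Fin k) R) (b d e f : R)

@[simp]
theorem borderMatrix_castSucc_castSucc (i j : Fin k) :
    borderMatrix M b d i.castSucc j.castSucc = M i j := by
  simp [borderMatrix]

@[simp]
theorem borderMatrix_castSucc_last (i : Fin k) :
    borderMatrix M b d i.castSucc (Fin.last k) = b := by
  simp [borderMatrix]

@[simp]
theorem borderMatrix_last_castSucc (j : Fin k) :
    borderMatrix M b d (Fin.last k) j.castSucc = b := by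
  simp [borderMatrix]

@[simp]
theorem borderMatrix_last_last : borderMatrix M b d (Fin.last k) (Fin.last k) = d := by
  simp [borderMatrix]

theorem transpose_borderMatrix : (borderMatrix M b d)ᵀ = borderMatrix Mᵀ b d := by
  ext x y
  induction x using Fin.lastCases <;> induction y using Fin.lastCases <;> simp

variable [Semiring R]

theorem borderMatrix_mul_borderMatrix_castSucc_castSucc (i j : Fin k) :
    (borderMatrix M b d * borderMatrix N e f) i.castSucc j.castSucc = (M * N) i j + b * e := by
  simp [mul_apply, Fin.sum_univ_castSucc]

theorem borderMatrix_mul_borderMatrix_castSucc_last (i : Fin k) :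
    (borderMatrix M b d * borderMatrix N e f) i.castSucc (Fin.last k) =
      (M *ᵥ 1) i * e + b * f := by
  simp [mul_apply, Fin.sum_univ_castSucc, mulVec, dotProduct, Finset.sum_mul]

theorem borderMatrix_mul_borderMatrix_last_castSucc (j : Fin k) :
    (borderMatrix M b d * borderMatrix N e f) (Fin.last k) j.castSucc =
      b * (1 ᵥ* N) j + d * e := by
  simp [mul_apply, Fin.sum_univ_castSucc, vecMul, dotProduct, Finset.mul_sum]

theorem borderMatrix_mul_borderMatrix_last_last :
    (borderMatrix M b d * borderMatrix N e f) (Fin.last k) (Fin.last k) = k * (b * e) + d * f := by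
  simp [mul_apply, Fin.sum_univ_castSucc]

theorem one_vecMul_borderMatrix_castSucc (j : Fin k) :
    (1 ᵥ* borderMatrix M b d) j.castSucc = (1 ᵥ* M) j + b := by
  simp [vecMul, dotProduct, Fin.sum_univ_castSucc]

theorem one_vecMul_borderMatrix_last : (1 ᵥ* borderMatrix M b d) (Fin.last k) = k * b + d := by
  simp [vecMul, dotProduct, Fin.sum_univ_castSucc]

end Border

theorem isMoorePenrose_borderMatrix {k : ℕ} {A : Matrix (Fin k) (Fin k) ℝ} [Invertible A]
    (hA : A.IsSymm) (hA1 : A *ᵥ 1 = 1) :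
    IsMoorePenrose (borderMatrix A (-1) k)
      (borderMatrix (A⁻¹ - (((k : ℝ) + 2) / ((k : ℝ) + 1) ^ 2) • vecMulVec 1 1)
        (-1 / ((k : ℝ) + 1) ^ 2) (k / ((k : ℝ) + 1) ^ 2)) := by
  set c := ((k : ℝ) + 2) / ((k : ℝ) + 1) ^ 2
  have h1A : 1 ᵥ* A = 1 := by rw [← mulVec_transpose, hA.eq, hA1]
  have h1Ainv : 1 ᵥ* A⁻¹ = 1 := by
    rw [← mulVec_transpose, hA.inv.eq, inv_mulVec_eq_vec hA1.symm]
  have h1J : (1 : Fin k → ℝ) ᵥ* vecMulVec 1 1 = (k : ℝ) • (1 : Fin k → ℝ) := by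
    rw [vecMul_vecMulVec]
    simp
  have hcol : 1 ᵥ* (A⁻¹ - c • vecMulVec 1 1) = (1 - k * c) • (1 : Fin k → ℝ) := by
    rw [vecMul_sub, vecMul_smul, h1Ainv, h1J, smul_smul, sub_smul, one_smul, mul_comm]
  have hAB : A * (A⁻¹ - c • vecMulVec 1 1) = 1 - c • vecMulVec 1 1 := by
    rw [Matrix.mul_sub, mul_inv_of_invertible, Matrix.mul_smul, mul_vecMulVec, hA1]
  have hk : (k : ℝ) + 1 ≠ 0 := by positivity
  apply isMoorePenrose_of_mul_eq_centeringMatrix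
  · rw [IsSymm, transpose_borderMatrix, hA.eq]
  · rw [IsSymm, transpose_borderMatrix, transpose_sub, hA.inv.eq, transpose_smul,
      transpose_vecMulVec]
  · ext x
    induction x using Fin.lastCases
    · simp [one_vecMul_borderMatrix_last]
    · simp [one_vecMul_borderMatrix_castSucc, h1A]
  · ext x
    induction x using Fin.lastCases
    · rw [one_vecMul_borderMatrix_last, Pi.zero_apply]
      ring
    · rw [one_vecMul_borderMatrix_castSucc, hcol]
      simp [c]
      field_simp
      ring
  · ext x y
    induction x using Fin.lastCases <;> induction y using Fin.lastCases
    · simp [borderMatrix_mul_borderMatrix_last_last, centeringMatrix_apply]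
      field_simp
      ring
    · rw [borderMatrix_mul_borderMatrix_last_castSucc, hcol]
      simp [centeringMatrix_apply, one_apply, (Fin.castSucc_ne_last _).symm, c]
      field_simp
      ring
    · simp [borderMatrix_mul_borderMatrix_castSucc_last, centeringMatrix_apply, hA1]
      field_simp
      ring
    · rw [borderMatrix_mul_borderMatrix_castSucc_castSucc, hAB]
      simp [centeringMatrix_apply, one_apply, c]
      field_simp
      ring

section Augment

variable {k : ℕ} (G : SimpleGraph (Fin k))

@[simp]
theorem augment_adj_castSucc_castSucc (i j : Fin k) :
    (augment G).Adj i.castSucc j.castSucc ↔ G.Adj i j := by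
  simp [augment, Fin.castSucc_ne_last]

@[simp]
theorem augment_adj_castSucc_last (i : Fin k) : (augment G).Adj i.castSucc (Fin.last k) := by
  simp [augment, Fin.castSucc_ne_last]

@[simp]
theorem augment_adj_last_castSucc (j : Fin k) : (augment G).Adj (Fin.last k) j.castSucc :=
  (augment_adj_castSucc_last G j).symm

theorem augment_degree_last : (augment G).degree (Fin.last k) = k := by
  simp only [SimpleGraph.degree, SimpleGraph.neighborFinset_eq_filter, Finset.card_filter,
    Fin.sum_univ_castSucc, augment_adj_last_castSucc, if_true, SimpleGraph.irrefl, if_false,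
    Finset.sum_const, Finset.card_univ, Fintype.card_fin, smul_eq_mul, mul_one, add_zero]

variable [DecidableRel G.Adj]

theorem augment_degree_castSucc (i : Fin k) : (augment G).degree i.castSucc = G.degree i + 1 := by
  simp only [SimpleGraph.degree, SimpleGraph.neighborFinset_eq_filter, Finset.card_filter,
    Fin.sum_univ_castSucc, augment_adj_castSucc_castSucc, augment_adj_castSucc_last, if_true]

theorem lapMatrix_augment (R : Type*) [Ring R] :
    (augment G).lapMatrix R = borderMatrix (1 + G.lapMatrix R) (-1) (k : R) := by
  ext x y
  induction x using Fin.lastCases <;> induction y using Fin.lastCases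
  · simp [SimpleGraph.lapMatrix, SimpleGraph.degMatrix, augment_degree_last]
  · simp [SimpleGraph.lapMatrix, SimpleGraph.degMatrix, (Fin.castSucc_ne_last _).symm]
  · simp [SimpleGraph.lapMatrix, SimpleGraph.degMatrix, Fin.castSucc_ne_last]
  · rename_i i j
    rcases eq_or_ne i j with rfl | hij
    · simp [SimpleGraph.lapMatrix, SimpleGraph.degMatrix, augment_degree_castSucc]
      exact add_comm _ _
    · simp [SimpleGraph.lapMatrix, SimpleGraph.degMatrix, hij]

end Augment

/-- The top-left `k × k` block of the Moore–Penrose pseudoinverse of the Laplacian of the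
augmented graph satisfies `(L_{G'}⁺)_{i,j} = (A_G⁻¹)_{i,j} − (k+2)/(k+1)²`. -/
theorem stmt_13 (k : ℕ) (G : SimpleGraph (Fin k)) [DecidableRel G.Adj]
    (P : Matrix (Fin (k + 1)) (Fin (k + 1)) ℝ)
    (hP : IsMoorePenrose ((augment G).lapMatrix ℝ) P) (i j : Fin k) :
    P i.castSucc j.castSucc =
      ((1 : Matrix (Fin k) (Fin k) ℝ) + G.lapMatrix ℝ)⁻¹ i j -
        ((k : ℝ) + 2) / ((k : ℝ) + 1) ^ 2 := by
  have hA : (1 + G.lapMatrix ℝ).PosDef := PosDef.one.add_posSemidef (G.posSemidef_lapMatrix ℝ)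
  have := hA.isUnit.invertible
  have hA1 : (1 + G.lapMatrix ℝ) *ᵥ 1 = 1 := by
    rw [add_mulVec, one_mulVec, Pi.one_def, G.lapMatrix_mulVec_const_eq_zero, add_zero]
  rw [lapMatrix_augment] at hP
  rw [hP.unique (isMoorePenrose_borderMatrix (isSymm_one.add (G.isSymm_lapMatrix ℝ)) hA1)]
  simp
end

section
/- Let L be the Laplacian of a connected graph on n vertices with Moore–Penrose pseudoinverse L^+, and define the resistance distance R_{i,j} = (L^+)_{i,i} + (L^+)_{j,j} − 2(L^+)_{i,j}. Then (L^+)_{i,j} = −(1/2)R_{i,j} + (1/(2n))Σ_l R_{i,l} + (1/(2n))Σ_l R_{j,l} − (1/(2n^2))Σ_{l,m} R_{l,m}. -/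
open Matrix Finset

/-!
The Moore–Penrose identities `B = B A B` and `(A B)ᵀ = A B` give `B = B Bᵀ Aᵀ`, so `B` kills the
kernel of `Aᵀ`. For the (symmetric) Laplacian this kernel contains the all-ones vector, hence every
row of `L⁺` sums to zero. Summing `R i l = L⁺ i i + L⁺ l l - 2 L⁺ i l` over `l` then gives
`Σ_l R i l = n L⁺ i i + tr L⁺` and `Σ_{l,m} R l m = 2 n tr L⁺`, from which `L⁺ i j` is recovered
by solving the defining relation of `R i j`.
-/

theorem IsMoorePenrose.mulVec_eq_zero {ι : Type*} [Fintype ι] {A B : Matrix ι ι ℝ}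
    (h : IsMoorePenrose A B) {v : ι → ℝ} (hv : Aᵀ *ᵥ v = 0) : B *ᵥ v = 0 := by
  obtain ⟨-, hBAB, hAB, -⟩ := h
  have hB : B = B * Bᵀ * Aᵀ := by
    conv_lhs => rw [← hBAB, Matrix.mul_assoc, ← hAB, transpose_mul]
    rw [Matrix.mul_assoc]
  rw [hB, ← mulVec_mulVec, hv, mulVec_zero]

theorem IsMoorePenrose.sum_row_lapMatrix_eq_zero {V : Type*} [Fintype V] [DecidableEq V]
    {G : SimpleGraph V} [DecidableRel G.Adj] {P : Matrix V V ℝ}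
    (hP : IsMoorePenrose (G.lapMatrix ℝ) P) (a : V) : ∑ l, P a l = 0 := by
  have hker : (G.lapMatrix ℝ)ᵀ *ᵥ (fun _ ↦ (1 : ℝ)) = 0 := by
    rw [G.isSymm_lapMatrix ℝ]
    exact G.lapMatrix_mulVec_const_eq_zero
  simpa [mulVec, dotProduct] using congrFun (hP.mulVec_eq_zero hker) a

section ResistanceSums

variable {ι : Type*} [Fintype ι] {P R : Matrix ι ι ℝ}
  (hrow : ∀ a, ∑ l, P a l = 0) (hR : ∀ i j, R i j = P i i + P j j - 2 * P i j)
include hrow hR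

theorem sum_resistance_row (a : ι) :
    ∑ l, R a l = Fintype.card ι * P a a + P.trace := by
  simp only [hR, sum_sub_distrib, sum_add_distrib, ← mul_sum, hrow, sum_const, card_univ,
    nsmul_eq_mul, trace, diag_apply]
  ring

theorem sum_sum_resistance :
    ∑ l, ∑ m, R l m = 2 * Fintype.card ι * P.trace := by
  simp only [sum_resistance_row hrow hR, sum_add_distrib, ← mul_sum, sum_const, card_univ,
    nsmul_eq_mul, trace, diag_apply]
  ring

theorem entry_eq_of_resistance (i j : ι) :
    P i j =
      -(1 / 2) * R i j + (1 / (2 * Fintype.card ι)) * ∑ l, R i l +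
        (1 / (2 * Fintype.card ι)) * ∑ l, R j l -
        (1 / (2 * (Fintype.card ι : ℝ) ^ 2)) * ∑ l, ∑ m, R l m := by
  have hcard : (Fintype.card ι : ℝ) ≠ 0 := by
    have : Nonempty ι := ⟨i⟩
    exact_mod_cast Fintype.card_ne_zero
  rw [hR i j, sum_resistance_row hrow hR, sum_resistance_row hrow hR, sum_sum_resistance hrow hR]
  field_simp
  ring

end ResistanceSums

theorem stmt_14_general (n : ℕ) (G : SimpleGraph (Fin n)) [DecidableRel G.Adj]
    (P : Matrix (Fin n) (Fin n) ℝ)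
    (hP : IsMoorePenrose (G.lapMatrix ℝ) P)
    (R : Matrix (Fin n) (Fin n) ℝ) (hR : ∀ i j, R i j = P i i + P j j - 2 * P i j)
    (i j : Fin n) :
    P i j =
      -(1 / 2) * R i j + (1 / (2 * n)) * ∑ l, R i l + (1 / (2 * n)) * ∑ l, R j l -
        (1 / (2 * (n : ℝ) ^ 2)) * ∑ l, ∑ m, R l m := by
  simpa only [Fintype.card_fin] using entry_eq_of_resistance hP.sum_row_lapMatrix_eq_zero hR i j

/-- For a connected graph on `n` vertices with Laplacian `L` and pseudoinverse `L⁺`, writing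
`R i j = L⁺ i i + L⁺ j j - 2 L⁺ i j` for the resistance distance,
`L⁺ i j = -(1/2) R i j + (1/(2n)) Σ_l R i l + (1/(2n)) Σ_l R j l - (1/(2n²)) Σ_{l,m} R l m`. -/
theorem stmt_14 (n : ℕ) (G : SimpleGraph (Fin n)) [DecidableRel G.Adj]
    (hconn : G.Connected) (P : Matrix (Fin n) (Fin n) ℝ)
    (hP : IsMoorePenrose (G.lapMatrix ℝ) P)
    (R : Matrix (Fin n) (Fin n) ℝ) (hR : ∀ i j, R i j = P i i + P j j - 2 * P i j)
    (i j : Fin n) :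
    P i j =
      -(1 / 2) * R i j + (1 / (2 * n)) * ∑ l, R i l + (1 / (2 * n)) * ∑ l, R j l -
        (1 / (2 * (n : ℝ) ^ 2)) * ∑ l, ∑ m, R l m :=
  stmt_14_general n G P hP R hR i j
end

section
/- Block pseudoinverse formula: let A be a k×k symmetric positive definite matrix with A·1 = 1, and let M = [[A, -1],[-1^T, k]] (a symmetric (k+1)×(k+1) matrix with zero row sums). Then the Moore–Penrose pseudoinverse of M has top-left k×k block equal to A^{-1} − (1/(1+k))(A^{-1}11^T A^{-2} + A^{-2}11^T A^{-1}) + ((1^T A^{-3} 1)/(1+k)^2) A^{-1}11^T A^{-1}. -/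
/-!
Since `A 1 = 1` and `A` is symmetric, also `A⁻¹ 1 = 1` and `1ᵀ A⁻¹ = 1ᵀ`, so every product
`A⁻ᵖ 1 1ᵀ A⁻q` collapses to `J = 1 1ᵀ` and the claimed block is `A⁻¹ - ((k+2)/(k+1)²) J`.
The bordered matrix `M` kills the all-ones vector `u` of length `k + 1`, so its pseudoinverse `Q`
must satisfy `M Q = Q M = 1 - u uᵀ/(k+1)`, the orthogonal projection onto `u⊥`. The ansatz
`Q = [[A⁻¹ - c J, -d 1], [-d 1ᵀ, s]]` solves this with `c = (k+2)/(k+1)²`, `d = 1/(k+1)²`,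
`s = k/(k+1)²`; it then satisfies all four Penrose equations, and the pseudoinverse is unique.
-/

open Matrix Finset

section AllOnes

variable {R : Type*} [CommRing R] {l m n o : Type*}

lemma const_eq_smul_of_one (a : R) :
    (fun _ _ => a : Matrix m n R) = a • (of 1 : Matrix m n R) := by
  ext; simp

lemma transpose_of_one : (of 1 : Matrix m n R)ᵀ = of 1 := rfl

lemma of_one_mul_of_one [Fintype m] :
    (of 1 : Matrix l m R) * (of 1 : Matrix m n R) = (Fintype.card m : R) • of 1 := by
  ext; simp [mul_apply]

lemma one_eq_of_one [Unique m] : (1 : Matrix m m R) = of 1 := by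
  ext i j; rw [Subsingleton.elim i j]; simp

lemma fromBlocks_of_one :
    fromBlocks (of 1) (of 1) (of 1) (of 1) = (of 1 : Matrix (n ⊕ o) (l ⊕ m) R) := by
  ext (i | i) (j | j) <;> rfl

lemma mul_of_one_of_mulVec_one [Fintype m] {A : Matrix l m R} (h : A *ᵥ 1 = 1) :
    A * (of 1 : Matrix m n R) = of 1 := by
  ext i j; simpa [mulVec, dotProduct, mul_apply] using congrFun h i

lemma of_one_mul_of_vecMul_one [Fintype m] {A : Matrix m n R} (h : 1 ᵥ* A = 1) :
    (of 1 : Matrix l m R) * A = of 1 := by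
  ext i j; simpa [vecMul, dotProduct, mul_apply] using congrFun h j

lemma inv_mulVec_one_of_mulVec_one [Fintype m] [DecidableEq m] {A : Matrix m m R}
    (hA : IsUnit A.det) (h : A *ᵥ 1 = 1) : A⁻¹ *ᵥ 1 = 1 := by
  rw [← h, mulVec_mulVec, nonsing_inv_mul A hA, one_mulVec, h]

lemma sum_sum_eq_card_of_mulVec_one [Fintype m] {X : Matrix m m R} (h : X *ᵥ 1 = 1) :
    ∑ a, ∑ b, X a b = Fintype.card m := by
  have hrow (a : m) : ∑ b, X a b = 1 := by simpa [mulVec, dotProduct] using congrFun h a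
  simp [hrow]

end AllOnes

namespace IsMoorePenrose

variable {n : Type*} [Fintype n]

theorem unique_s16 {M B C : Matrix n n ℝ} (hB : IsMoorePenrose M B) (hC : IsMoorePenrose M C) :
    B = C := by
  obtain ⟨hB1, hB2, hB3, hB4⟩ := hB
  obtain ⟨hC1, hC2, hC3, hC4⟩ := hC
  have hB_eq : B = B * M * C := calc
    B = B * M * B := hB2.symm
    _ = B * (M * B)ᵀ := by rw [hB3, Matrix.mul_assoc]
    _ = B * (M * C * M * B)ᵀ := by rw [hC1]
    _ = B * ((M * B)ᵀ * (M * C)ᵀ) := by simp only [transpose_mul, Matrix.mul_assoc]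
    _ = B * M * B * (M * C) := by rw [hB3, hC3]; simp only [Matrix.mul_assoc]
    _ = B * M * C := by rw [hB2, Matrix.mul_assoc]
  have hC_eq : C = B * M * C := calc
    C = C * M * C := hC2.symm
    _ = (C * M)ᵀ * C := by rw [hC4]
    _ = (C * (M * B * M))ᵀ * C := by rw [hB1]
    _ = (B * M)ᵀ * (C * M)ᵀ * C := by simp only [transpose_mul, Matrix.mul_assoc]
    _ = B * M * (C * M * C) := by rw [hB4, hC4]; simp only [Matrix.mul_assoc]
    _ = B * M * C := by rw [hC2]
  rw [hB_eq, ← hC_eq]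

theorem of_mul_eq_one_sub [DecidableEq n] {M Q E : Matrix n n ℝ} (hM : Mᵀ = M) (hQ : Qᵀ = Q)
    (hE : Eᵀ = E) (hEM : E * M = 0) (hEQ : E * Q = 0) (hMQ : M * Q = 1 - E) :
    IsMoorePenrose M Q := by
  have hsymm : (1 - E)ᵀ = 1 - E := by rw [transpose_sub, transpose_one, hE]
  have hQM : Q * M = 1 - E := by rw [← hQ, ← hM, ← transpose_mul, hMQ, hsymm]
  refine ⟨?_, ?_, ?_, ?_⟩
  · rw [hMQ, Matrix.sub_mul, Matrix.one_mul, hEM, sub_zero]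
  · rw [hQM, Matrix.sub_mul, Matrix.one_mul, hEQ, sub_zero]
  · rw [hMQ, hsymm]
  · rw [hQM, hsymm]

end IsMoorePenrose

section Bordered

variable {n : Type*} [Fintype n] {A : Matrix n n ℝ}

def bordered (A : Matrix n n ℝ) : Matrix (n ⊕ Unit) (n ⊕ Unit) ℝ :=
  fromBlocks A (-of 1) (-of 1) ((Fintype.card n : ℝ) • of 1)

lemma transpose_bordered (hA : Aᵀ = A) : (bordered A)ᵀ = bordered A := by
  simp only [bordered, fromBlocks_transpose, transpose_neg, transpose_smul, transpose_of_one, hA]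

lemma of_one_mul_bordered (hA : Aᵀ = A) (h1 : A *ᵥ 1 = 1) : of 1 * bordered A = 0 := by
  have h1' : 1 ᵥ* A = 1 := by simpa only [hA, h1] using vecMul_transpose A 1
  simp only [bordered, ← fromBlocks_of_one, fromBlocks_multiply, of_one_mul_of_vecMul_one h1',
    Matrix.mul_neg, Matrix.mul_smul, of_one_mul_of_one, Fintype.card_unit, Nat.cast_one, one_smul,
    add_neg_cancel, neg_add_cancel, fromBlocks_zero]

variable [DecidableEq n]

noncomputable def borderedPinv (A : Matrix n n ℝ) : Matrix (n ⊕ Unit) (n ⊕ Unit) ℝ :=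
  let k : ℝ := Fintype.card n
  let t : ℝ := (k + 1)⁻¹
  fromBlocks (A⁻¹ - ((k + 2) * t ^ 2) • of 1) ((-t ^ 2) • of 1) ((-t ^ 2) • of 1)
    ((k * t ^ 2) • of 1)

lemma transpose_borderedPinv (hA : Aᵀ = A) : (borderedPinv A)ᵀ = borderedPinv A := by
  simp only [borderedPinv, fromBlocks_transpose, transpose_sub, transpose_smul, transpose_of_one,
    transpose_nonsing_inv, hA]

lemma of_one_mul_inv_of_mulVec_one {m : Type*} (hA : Aᵀ = A) (hdet : IsUnit A.det)
    (h1 : A *ᵥ 1 = 1) :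
    (of 1 : Matrix m n ℝ) * A⁻¹ = of 1 := by
  refine of_one_mul_of_vecMul_one ?_
  rw [← transpose_transpose A⁻¹, vecMul_transpose, transpose_nonsing_inv, hA,
    inv_mulVec_one_of_mulVec_one hdet h1]

lemma of_one_mul_borderedPinv (hA : Aᵀ = A) (hdet : IsUnit A.det) (h1 : A *ᵥ 1 = 1) :
    of 1 * borderedPinv A = 0 := by
  simp only [borderedPinv, ← fromBlocks_of_one, fromBlocks_multiply,
    of_one_mul_inv_of_mulVec_one hA hdet h1, Matrix.mul_sub, Matrix.mul_smul, of_one_mul_of_one,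
    Fintype.card_unit, smul_smul]
  rw [← fromBlocks_zero]
  simp only [fromBlocks_inj]
  refine ⟨?_, ?_, ?_, ?_⟩ <;> match_scalars <;> field_simp <;> ring

lemma bordered_mul_borderedPinv (hA : Aᵀ = A) (hdet : IsUnit A.det) (h1 : A *ᵥ 1 = 1) :
    bordered A * borderedPinv A = 1 - ((Fintype.card n : ℝ) + 1)⁻¹ • of 1 := by
  refine eq_sub_of_add_eq ?_
  simp only [bordered, borderedPinv, ← fromBlocks_of_one, ← fromBlocks_one, fromBlocks_add,
    fromBlocks_multiply, Matrix.mul_sub, mul_nonsing_inv _ hdet, mul_of_one_of_mulVec_one h1,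
    fromBlocks_smul, Matrix.mul_smul, Matrix.smul_mul, Matrix.neg_mul, of_one_mul_of_one,
    smul_smul, Fintype.card_unit, one_eq_of_one, fromBlocks_inj,
    of_one_mul_inv_of_mulVec_one hA hdet h1]
  refine ⟨?_, ?_, ?_, ?_⟩ <;> match_scalars <;> field_simp <;> ring

lemma isMoorePenrose_bordered (hA : Aᵀ = A) (hdet : IsUnit A.det) (h1 : A *ᵥ 1 = 1) :
    IsMoorePenrose (bordered A) (borderedPinv A) :=
  .of_mul_eq_one_sub (transpose_bordered hA) (transpose_borderedPinv hA)
    (by rw [transpose_smul, transpose_of_one])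
    (by rw [smul_mul, of_one_mul_bordered hA h1, smul_zero])
    (by rw [smul_mul, of_one_mul_borderedPinv hA hdet h1, smul_zero])
    (bordered_mul_borderedPinv hA hdet h1)

lemma toBlocks₁₁_borderedPinv (hA : Aᵀ = A) (hdet : IsUnit A.det) (h1 : A *ᵥ 1 = 1) :
    (borderedPinv A).toBlocks₁₁ =
      A⁻¹
        - (1 / (1 + (Fintype.card n : ℝ))) •
            (A⁻¹ * of 1 * (A⁻¹ * A⁻¹) + (A⁻¹ * A⁻¹) * of 1 * A⁻¹)
        + ((∑ a, ∑ b, (A⁻¹ * A⁻¹ * A⁻¹) a b) / (1 + (Fintype.card n : ℝ)) ^ 2) •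
            (A⁻¹ * of 1 * A⁻¹) := by
  have hinv1 : A⁻¹ *ᵥ 1 = 1 := inv_mulVec_one_of_mulVec_one hdet h1
  have hinvJ : A⁻¹ * of 1 = of 1 := mul_of_one_of_mulVec_one hinv1
  have hJinv : of 1 * A⁻¹ = of 1 := of_one_mul_inv_of_mulVec_one hA hdet h1
  have hinvinvJ : A⁻¹ * A⁻¹ * of 1 = of 1 := by rw [Matrix.mul_assoc, hinvJ, hinvJ]
  have hsum : ∑ a, ∑ b, (A⁻¹ * A⁻¹ * A⁻¹) a b = Fintype.card n := by
    refine sum_sum_eq_card_of_mulVec_one ?_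
    rw [← mulVec_mulVec, ← mulVec_mulVec, hinv1, hinv1, hinv1]
  simp only [← Matrix.mul_assoc, hinvJ, hJinv, hinvinvJ, hsum, borderedPinv,
    toBlocks_fromBlocks₁₁]
  have hk : (Fintype.card n : ℝ) + 1 ≠ 0 := by positivity
  match_scalars
  · ring
  · field_simp
    ring

end Bordered

/-- Block pseudoinverse formula: for `A` symmetric positive definite with `A·1 = 1` and the
bordered matrix `M = [[A, -1],[-1ᵀ, k]]`, the top-left `k × k` block of `M⁺` equals
`A⁻¹ − (1/(1+k))(A⁻¹11ᵀA⁻² + A⁻²11ᵀA⁻¹) + ((1ᵀA⁻³1)/(1+k)²) A⁻¹11ᵀA⁻¹`. -/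
theorem stmt_16 (k : ℕ) (A : Matrix (Fin k) (Fin k) ℝ) (hA : A.PosDef)
    (hA1 : A *ᵥ (fun _ => (1 : ℝ)) = fun _ => (1 : ℝ))
    (P : Matrix (Fin k ⊕ Unit) (Fin k ⊕ Unit) ℝ)
    (hP : IsMoorePenrose
      (Matrix.fromBlocks A (fun _ _ => -1) (fun _ _ => -1) (fun _ _ => (k : ℝ))) P)
    (i j : Fin k) :
    P (Sum.inl i) (Sum.inl j) =
      (A⁻¹
        - (1 / (1 + (k : ℝ))) •
            (A⁻¹ * (Matrix.of fun _ _ => (1 : ℝ)) * (A⁻¹ * A⁻¹)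
              + (A⁻¹ * A⁻¹) * (Matrix.of fun _ _ => (1 : ℝ)) * A⁻¹)
        + ((∑ a, ∑ b, (A⁻¹ * A⁻¹ * A⁻¹) a b) / (1 + (k : ℝ)) ^ 2) •
            (A⁻¹ * (Matrix.of fun _ _ => (1 : ℝ)) * A⁻¹)
        : Matrix (Fin k) (Fin k) ℝ) i j := by
  have hsymm : Aᵀ = A := hA.isHermitian.eq
  have hdet : IsUnit A.det := (isUnit_iff_isUnit_det A).mp hA.isUnit
  have hbordered : fromBlocks A (fun _ _ => -1) (fun _ _ => -1) (fun _ _ => (k : ℝ)) =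
      bordered A := by
    simp only [bordered, Fintype.card_fin, const_eq_smul_of_one, neg_smul, one_smul]
  rw [hbordered] at hP
  have hblock := toBlocks₁₁_borderedPinv hsymm hdet hA1
  rw [Fintype.card_fin, ← hP.unique_s16 (isMoorePenrose_bordered hsymm hdet hA1)] at hblock
  exact congrFun (congrFun hblock i) j
end
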